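/- arXiv:1501.01569 — 4 statements merged into one kernel-verified Lean document; each statement's English description precedes it below -/
import Mathlib

section
/- Let 0 < n < d be integers, Γ ⊂ ℝ^d an n-dimensional Lipschitz graph with Lipschitz constant Λ, μ a finite Borel measure on ℝ^d and M > 0. Suppose {Δ_i}_{i∈I} is a countable family of closed balls Δ_i = B̄(x_i, 5ρ_i) with x_i ∈ Γ such that μ(B(x_i,ρ_i)) ≥ M ρ_i^n for every i. Then for every integer k ≥ 1, H^n(Γ ∩ ∪_{i∈I} B̄(x_i, 5kρ_i)) ≤ C(n,d,Λ) (k+1)^n μ(ℝ^d)/M. In particular this quantity tends to 0 as M → ∞. -/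
open MeasureTheory Metric Set
open scoped ENNReal NNReal

noncomputable section

/-- `ℝ^d` with the Euclidean metric. -/
abbrev Ed (d : ℕ) := EuclideanSpace ℝ (Fin d)

/-- `L` is an affine `n`-plane in `ℝ^d`. -/
def IsAffinePlane (d n : ℕ) (L : AffineSubspace ℝ (Ed d)) : Prop :=
  (L : Set (Ed d)).Nonempty ∧ Module.finrank ℝ L.direction = n

/-- The coefficient `β_{μ,p}^n(x,r)`. -/
def betaP (d n : ℕ) (p : ℝ) (μ : Measure (Ed d)) (x : Ed d) (r : ℝ) : ℝ :=
  sInf { b : ℝ | ∃ L : AffineSubspace ℝ (Ed d), IsAffinePlane d n L ∧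
    b = (1 / r ^ n *
        ∫ y in closedBall x r, (Metric.infDist y (L : Set (Ed d)) / r) ^ p ∂μ) ^ (1 / p) }

/-- `dist_B(σ,ν)`: sup over ``1``-Lipschitz functions supported in `B` of `|∫ f dσ − ∫ f dν|`. -/
def distB (d : ℕ) (B : Set (Ed d)) (σ ν : Measure (Ed d)) : ℝ :=
  sSup { t : ℝ | ∃ f : Ed d → ℝ, LipschitzWith 1 f ∧ Function.support f ⊆ B ∧
    t = |∫ y, f y ∂σ - ∫ y, f y ∂ν| }

/-- The coefficient `α_μ^n(x,r)`. -/
def alphaC (d n : ℕ) (μ : Measure (Ed d)) (x : Ed d) (r : ℝ) : ℝ :=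
  (1 / r ^ (n + 1)) *
    sInf { t : ℝ | ∃ (a : ℝ≥0) (L : AffineSubspace ℝ (Ed d)), IsAffinePlane d n L ∧
      ((L : Set (Ed d)) ∩ closedBall x r).Nonempty ∧
      t = distB d (closedBall x (3 * r)) μ
            ((a : ℝ≥0∞) • (μH[(n : ℝ)]).restrict (L : Set (Ed d))) }

/-- Jones' square function for the `β_{μ,p}^n` coefficients: `∫₀^∞ β_{μ,p}^n(x,r)² dr/r`. -/
def jonesBeta (d n : ℕ) (p : ℝ) (μ : Measure (Ed d)) (x : Ed d) : ℝ≥0∞ :=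
  ∫⁻ r in Ioi (0 : ℝ), ENNReal.ofReal (betaP d n p μ x r ^ 2 / r)

/-- The square function `∫₀^∞ α_μ^n(x,r)² dr/r`. -/
def jonesAlpha (d n : ℕ) (μ : Measure (Ed d)) (x : Ed d) : ℝ≥0∞ :=
  ∫⁻ r in Ioi (0 : ℝ), ENNReal.ofReal (alphaC d n μ x r ^ 2 / r)

/-- A set `E ⊂ ℝ^d` is `n`-rectifiable. -/
def IsRectifiableSet (d n : ℕ) (E : Set (Ed d)) : Prop :=
  ∃ f : ℕ → EuclideanSpace ℝ (Fin n) → Ed d,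
    (∀ i, ∃ K : ℝ≥0, LipschitzWith K (f i)) ∧
    μH[(n : ℝ)] (E \ ⋃ i, Set.range (f i)) = 0

/-- A measure `μ` on `ℝ^d` is `n`-rectifiable. -/
def IsRectifiableMeasure (d n : ℕ) (μ : Measure (Ed d)) : Prop :=
  ∃ E : Set (Ed d), IsRectifiableSet d n E ∧ μ Eᶜ = 0 ∧
    μ ≪ (μH[(n : ℝ)]).restrict E

/-- The support of a measure: points all whose neighbourhoods have positive measure. -/
def msupport (d : ℕ) (μ : Measure (Ed d)) : Set (Ed d) :=
  { x | ∀ r : ℝ, 0 < r → 0 < μ (ball x r) }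

/-- The (half-open) dyadic cube of sidelength `2^k` determined by `m`. -/
def dyadicCube (d : ℕ) (k : ℤ) (m : Fin d → ℤ) : Set (Ed d) :=
  { y | ∀ i, (m i : ℝ) * 2 ^ k ≤ y i ∧ y i < ((m i : ℝ) + 1) * 2 ^ k }

/-- The center of the dyadic cube. -/
def dyadicCenter (d : ℕ) (k : ℤ) (m : Fin d → ℤ) : Ed d :=
  (WithLp.equiv 2 (Fin d → ℝ)).symm fun i => ((m i : ℝ) + 1 / 2) * 2 ^ k

/-- The cube concentric with the dyadic cube `Q(k,m)`, dilated by the factor `c` (e.g. `3Q`). -/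
def cubeDilate (d : ℕ) (c : ℝ) (k : ℤ) (m : Fin d → ℤ) : Set (Ed d) :=
  (fun y => dyadicCenter d k m + c • (y - dyadicCenter d k m)) '' dyadicCube d k m

/-- The ball `B_Q = B̄(x_Q, 3 diam Q)` associated with a dyadic cube. -/
def ballBQ (d : ℕ) (k : ℤ) (m : Fin d → ℤ) : Set (Ed d) :=
  closedBall (dyadicCenter d k m) (3 * Metric.diam (dyadicCube d k m))

/-- The map `x ↦ (x, A x) ∈ ℝ^n × ℝ^{d-n} = ℝ^d`. -/
def graphMap (d n : ℕ) (A : EuclideanSpace ℝ (Fin n) → EuclideanSpace ℝ (Fin (d - n)))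
    (x : EuclideanSpace ℝ (Fin n)) : Ed d :=
  (WithLp.equiv 2 (Fin d → ℝ)).symm fun i =>
    if h : (i : ℕ) < n then x ⟨i, h⟩ else A x ⟨(i : ℕ) - n, by have := i.isLt; omega⟩

/-- `Γ ⊂ ℝ^d` is the graph of a `Λ`-Lipschitz function `A : ℝ^n → ℝ^{d-n}`. -/
def IsLipschitzGraph (d n : ℕ) (Λ : ℝ≥0) (Γ : Set (Ed d)) : Prop :=
  ∃ A : EuclideanSpace ℝ (Fin n) → EuclideanSpace ℝ (Fin (d - n)),
    LipschitzWith Λ A ∧ Γ = Set.range (graphMap d n A)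

/-- The distance between two subsets of `ℝ^d`. -/
def setDist' (d : ℕ) (s t : Set (Ed d)) : ℝ :=
  sInf { r : ℝ | ∃ p ∈ s, ∃ q ∈ t, r = dist p q }

/-!
A Lipschitz graph is upper Ahlfors regular: the map `x ↦ (x, A x)` is `(1 + Λ)`-Lipschitz and does
not decrease distances, so `H^n(Γ ∩ B̄(z, r)) ≤ (1 + Λ)^n H^n(B̄(0, 1)) r^n`. The radii are bounded,
since `M ρ_i^n ≤ μ(ℝ^d)`, so the Vitali covering lemma extracts a disjoint subfamily of the balls
`B̄(x_i, 5kρ_i)` whose `5`-fold enlargements cover their union. Each enlargement carries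
`H^n`-measure at most a constant times `(25k)^n ρ_i^n ≤ (25k)^n μ(B(x_i, ρ_i)) / M`, and the balls
`B(x_i, ρ_i)` of the subfamily are disjoint, so the total is at most a constant times
`(25k)^n μ(ℝ^d) / M`.
-/

section LipschitzGraph

variable {d n : ℕ}

lemma dist_graphMap_sq (hnd : n ≤ d)
    (A : EuclideanSpace ℝ (Fin n) → EuclideanSpace ℝ (Fin (d - n)))
    (x y : EuclideanSpace ℝ (Fin n)) :
    dist (graphMap d n A x) (graphMap d n A y) ^ 2 = dist x y ^ 2 + dist (A x) (A y) ^ 2 := by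
  simp only [EuclideanSpace.dist_eq, Real.sq_sqrt (Finset.sum_nonneg fun _ _ => sq_nonneg _)]
  rw [← (finCongr (Nat.add_sub_of_le hnd)).sum_comp, Fin.sum_univ_add]
  congr 1 <;> simp [graphMap]

lemma dist_le_dist_graphMap (hnd : n ≤ d)
    (A : EuclideanSpace ℝ (Fin n) → EuclideanSpace ℝ (Fin (d - n)))
    (x y : EuclideanSpace ℝ (Fin n)) :
    dist x y ≤ dist (graphMap d n A x) (graphMap d n A y) := by
  rw [← pow_le_pow_iff_left₀ dist_nonneg dist_nonneg two_ne_zero, dist_graphMap_sq hnd]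
  exact le_add_of_nonneg_right (sq_nonneg _)

lemma LipschitzWith.graphMap (hnd : n ≤ d) {Λ : ℝ≥0}
    {A : EuclideanSpace ℝ (Fin n) → EuclideanSpace ℝ (Fin (d - n))} (hA : LipschitzWith Λ A) :
    LipschitzWith (1 + Λ) (graphMap d n A) := by
  refine LipschitzWith.of_dist_le_mul fun x y => ?_
  have hAxy := hA.dist_le_mul x y
  rw [← pow_le_pow_iff_left₀ dist_nonneg (by positivity) two_ne_zero, dist_graphMap_sq hnd]
  push_cast
  nlinarith [dist_nonneg (x := x) (y := y), dist_nonneg (x := A x) (y := A y), Λ.coe_nonneg]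

theorem IsLipschitzGraph.hausdorffMeasure_inter_closedBall_le (hnd : n ≤ d) {Λ : ℝ≥0}
    {Γ : Set (Ed d)} (hΓ : IsLipschitzGraph d n Λ Γ) {z : Ed d} (hz : z ∈ Γ) {r : ℝ}
    (hr : 0 ≤ r) :
    μH[n] (Γ ∩ closedBall z r) ≤
      (1 + Λ) ^ n * μH[n] (closedBall (0 : EuclideanSpace ℝ (Fin n)) 1) * ENNReal.ofReal r ^ n := by
  obtain ⟨A, hA, rfl⟩ := hΓ
  obtain ⟨z, rfl⟩ := hz
  have hsub : range (graphMap d n A) ∩ closedBall (graphMap d n A z) r ⊆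
      graphMap d n A '' closedBall z r := by
    rintro _ ⟨⟨y, rfl⟩, hy⟩
    exact ⟨y, (dist_le_dist_graphMap hnd A y z).trans hy, rfl⟩
  calc μH[n] (range (graphMap d n A) ∩ closedBall (graphMap d n A z) r)
      ≤ μH[n] (graphMap d n A '' closedBall z r) := measure_mono hsub
    _ ≤ ((1 + Λ : ℝ≥0) : ℝ≥0∞) ^ (n : ℝ) * μH[n] (closedBall z r) :=
      (hA.graphMap hnd).hausdorffMeasure_image_le (Nat.cast_nonneg n) _
    _ = _ := by
      rw [Measure.addHaar_closedBall' _ _ hr, finrank_euclideanSpace_fin, ENNReal.rpow_natCast,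
        ENNReal.ofReal_pow hr]
      push_cast
      ring

end LipschitzGraph

section Covering

variable {ι X : Type*} [Countable ι] [PseudoMetricSpace X] [MeasurableSpace X]
  [OpensMeasurableSpace X]

theorem measure_inter_biUnion_closedBall_le (ν μ : Measure X) (E : Set X) (I : Set ι)
    (x : ι → X) (ρ : ι → ℝ) {t R : ℝ} (c : ℝ≥0∞) (ht : 1 ≤ t) (hR : ∀ i ∈ I, ρ i ≤ R)
    (hν : ∀ i ∈ I, 0 ≤ ρ i → ν (E ∩ closedBall (x i) (5 * t * ρ i)) ≤ c * μ (ball (x i) (ρ i))) :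
    ν (E ∩ ⋃ i ∈ I, closedBall (x i) (t * ρ i)) ≤ c * μ univ := by
  obtain ⟨u, huI, hdisj, hcov⟩ :=
    Vitali.exists_disjoint_subfamily_covering_enlargement_closedBall I x (fun i => t * ρ i)
      (t * R) (fun i hi => by gcongr; exact hR i hi) 5 (by norm_num)
  have hball : ∀ i, ball (x i) (ρ i) ⊆ closedBall (x i) (t * ρ i) := fun i => by
    rcases lt_or_ge (ρ i) 0 with hρ | hρ
    · simp [ball_eq_empty.mpr hρ.le]
    · exact ball_subset_closedBall.trans (closedBall_subset_closedBall (by nlinarith))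
  have hsub : E ∩ ⋃ i ∈ I, closedBall (x i) (t * ρ i) ⊆
      ⋃ b ∈ u, E ∩ closedBall (x b) (5 * t * ρ b) := by
    rintro y ⟨hyE, hy⟩
    obtain ⟨i, hi, hyi⟩ := mem_iUnion₂.mp hy
    obtain ⟨b, hb, hib⟩ := hcov i hi
    exact mem_iUnion₂.mpr ⟨b, hb, hyE, by simpa only [mul_assoc] using hib hyi⟩
  have hbound : ∀ b ∈ u, ν (E ∩ closedBall (x b) (5 * t * ρ b)) ≤ c * μ (ball (x b) (ρ b)) :=
    fun b hb => by
      rcases lt_or_ge (ρ b) 0 with hρ | hρ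
      · simp [closedBall_eq_empty.mpr (by nlinarith : 5 * t * ρ b < 0)]
      · exact hν b (huI hb) hρ
  calc ν (E ∩ ⋃ i ∈ I, closedBall (x i) (t * ρ i))
      ≤ ∑' b : u, ν (E ∩ closedBall (x b) (5 * t * ρ b)) :=
        (measure_mono hsub).trans (measure_biUnion_le _ u.to_countable _)
    _ ≤ ∑' b : u, c * μ (ball (x b) (ρ b)) := ENNReal.tsum_le_tsum fun b => hbound b b.2
    _ = c * μ (⋃ b ∈ u, ball (x b) (ρ b)) := by
        rw [ENNReal.tsum_mul_left, measure_biUnion u.to_countable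
          (hdisj.mono fun b => hball b) fun _ _ => measurableSet_ball]
    _ ≤ c * μ univ := by gcongr; exact subset_univ _

end Covering

section Density

variable {n : ℕ} {M ρ : ℝ} {m : ℝ≥0∞}

lemma le_max_one_div_of_ofReal_mul_pow_le (hn : n ≠ 0) (hM : 0 < M) (hm : m ≠ ⊤)
    (h : ENNReal.ofReal (M * ρ ^ n) ≤ m) : ρ ≤ max 1 (m.toReal / M) := by
  rcases le_or_gt ρ 1 with hρ | hρ
  · exact le_max_of_le_left hρ
  refine le_max_of_le_right ((le_self_pow₀ hρ.le hn).trans ?_)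
  rw [le_div_iff₀ hM, mul_comm]
  exact (ENNReal.ofReal_le_iff_le_toReal hm).mp h

lemma ofReal_pow_le_div_of_ofReal_mul_pow_le (hM : 0 < M) (hρ : 0 ≤ ρ)
    (h : ENNReal.ofReal (M * ρ ^ n) ≤ m) : ENNReal.ofReal ρ ^ n ≤ m / ENNReal.ofReal M := by
  rw [ENNReal.le_div_iff_mul_le (Or.inl (by simpa using hM)) (Or.inl ENNReal.ofReal_ne_top),
    ← ENNReal.ofReal_pow hρ, ← ENNReal.ofReal_mul (by positivity), mul_comm]
  exact h

end Density

lemma IsLipschitzGraph.hausdorffMeasure_inter_closedBall_le_of_density {d n : ℕ} (hnd : n ≤ d)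
    {Λ : ℝ≥0} {Γ : Set (Ed d)} (hΓ : IsLipschitzGraph d n Λ Γ) {μ : Measure (Ed d)} {M ρ s : ℝ}
    (hM : 0 < M) (hρ : 0 ≤ ρ) (hs : 0 ≤ s) {z : Ed d} (hz : z ∈ Γ)
    (hμ : ENNReal.ofReal (M * ρ ^ n) ≤ μ (ball z ρ)) :
    μH[n] (Γ ∩ closedBall z (s * ρ)) ≤
      (1 + Λ) ^ n * μH[n] (closedBall (0 : EuclideanSpace ℝ (Fin n)) 1) * ENNReal.ofReal s ^ n /
        ENNReal.ofReal M * μ (ball z ρ) := by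
  refine (hΓ.hausdorffMeasure_inter_closedBall_le hnd hz (by positivity)).trans ?_
  rw [ENNReal.ofReal_mul hs, mul_pow, ← mul_assoc, ← ENNReal.mul_div_right_comm, mul_div_assoc]
  exact mul_le_mul_right (ofReal_pow_le_div_of_ofReal_mul_pow_le hM hρ hμ) _

/-- Let `Γ` be an `n`-dimensional Lipschitz graph with constant `Λ`, `μ` a
finite Borel measure, `M > 0`, and `{B̄(x_i,5ρ_i)}_{i∈I}` a countable family of closed balls
centered on `Γ` with `μ(B(x_i,ρ_i)) ≥ M ρ_i^n`. Then for every integer `k ≥ 1`,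
`H^n(Γ ∩ ⋃_i B̄(x_i,5kρ_i)) ≤ C(n,d,Λ) (k+1)^n μ(ℝ^d)/M`. -/
theorem stmt5 (d n : ℕ) (hn : 0 < n) (hnd : n < d) (Λ : ℝ≥0) :
    ∃ C : ℝ≥0, 0 < C ∧
      ∀ Γ : Set (Ed d), IsLipschitzGraph d n Λ Γ →
        ∀ μ : Measure (Ed d), IsFiniteMeasure μ →
          ∀ M : ℝ, 0 < M →
            ∀ (x : ℕ → Ed d) (ρ : ℕ → ℝ) (I : Set ℕ),
              (∀ i ∈ I, x i ∈ Γ) →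
              (∀ i ∈ I, ENNReal.ofReal (M * ρ i ^ n) ≤ μ (ball (x i) (ρ i))) →
              ∀ k : ℕ, 1 ≤ k →
                μH[(n : ℝ)] (Γ ∩ ⋃ i ∈ I, closedBall (x i) (5 * k * ρ i)) ≤
                  (C : ℝ≥0∞) * (k + 1) ^ n * μ Set.univ / ENNReal.ofReal M := by
  set H₀ := μH[n] (closedBall (0 : EuclideanSpace ℝ (Fin n)) 1)
  have hH₀ : H₀ ≠ ⊤ := measure_closedBall_lt_top.ne
  refine ⟨(1 + Λ) ^ n * 25 ^ n * H₀.toNNReal, ?_, ?_⟩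
  · have := ENNReal.toNNReal_pos (measure_closedBall_pos _ _ one_pos).ne' hH₀
    positivity
  intro Γ hΓ μ _ M hM x ρ I hxΓ hμ k hk
  have hk' : (1 : ℝ) ≤ 5 * k := by norm_cast; omega
  calc μH[n] (Γ ∩ ⋃ i ∈ I, closedBall (x i) (5 * k * ρ i))
      ≤ (1 + Λ) ^ n * H₀ * ENNReal.ofReal (5 * (5 * k)) ^ n / ENNReal.ofReal M * μ univ :=
      measure_inter_biUnion_closedBall_le _ μ Γ I x ρ _ hk'
        (fun i hi => le_max_one_div_of_ofReal_mul_pow_le hn.ne' hM (measure_ne_top μ univ)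
          ((hμ i hi).trans (measure_mono (subset_univ _))))
        fun i hi hρ => hΓ.hausdorffMeasure_inter_closedBall_le_of_density hnd.le hM hρ
          (by positivity) (hxΓ i hi) (hμ i hi)
    _ ≤ (1 + Λ) ^ n * H₀ * (25 * (k + 1)) ^ n * μ univ / ENNReal.ofReal M := by
        rw [← ENNReal.mul_div_right_comm]
        gcongr
        rw [show (5 : ℝ) * (5 * k) = ((25 * k : ℕ) : ℝ) by push_cast; ring, ENNReal.ofReal_natCast]
        push_cast
        gcongr
        exact le_self_add
    _ = _ := by
        rw [mul_pow]
        push_cast [ENNReal.coe_toNNReal hH₀]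
        congr 1
        ring

end
end

section
/- Let 0 < n < d be integers and μ a Radon measure on ℝ^d. There is a constant c = c(n,d) such that β_{μ,1}^n(x,r) ≤ c · α_μ^n(x,2r) for every x ∈ supp μ and every r > 0. -/
open MeasureTheory Metric Set
open scoped ENNReal NNReal

noncomputable section

/-!
Test `α` against `f = min (dist(·, L)) (6r - |· - x|)₊`. It is `1`-Lipschitz, supported in
`B̄(x, 6r)`, vanishes on `L` (so `∫ f d(a H^n|_L) = 0`), and agrees with `dist(·, L)` on
`B̄(x, r)` because `L` meets `B̄(x, 2r)`. Hence
`r^(n+1) β_{μ,1}^n(x, r) ≤ ∫_{B̄(x,r)} dist(y, L) dμ(y) ≤ ∫ f dμ ≤ dist_{B̄(x,6r)}(μ, a H^n|_L)`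
for every admissible `(a, L)`, which gives `c = 2^(n+1)`.
-/

section TestFunction

variable {X : Type*} [PseudoMetricSpace X]

def cutoffInfDist (s : Set X) (x : X) (ρ : ℝ) (y : X) : ℝ :=
  min (infDist y s) (max 0 (ρ - dist y x))

lemma lipschitzWith_cutoffInfDist (s : Set X) (x : X) (ρ : ℝ) :
    LipschitzWith 1 (cutoffInfDist s x ρ) := by
  have h := ((LipschitzWith.const ρ).sub (LipschitzWith.dist_left x)).const_max 0
  have := (lipschitz_infDist_pt s).min h
  rw [zero_add, max_self] at this
  exact this

lemma cutoffInfDist_nonneg (s : Set X) (x : X) (ρ : ℝ) (y : X) : 0 ≤ cutoffInfDist s x ρ y :=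
  le_min infDist_nonneg (le_max_left _ _)

lemma support_cutoffInfDist_subset (s : Set X) (x : X) (ρ : ℝ) :
    Function.support (cutoffInfDist s x ρ) ⊆ closedBall x ρ := by
  intro y hy
  by_contra hyB
  have hρ : ρ - dist y x ≤ 0 := by linarith [not_le.1 (mt mem_closedBall.2 hyB)]
  exact hy (by rw [cutoffInfDist, max_eq_left hρ, min_eq_right infDist_nonneg])

lemma cutoffInfDist_of_mem {s : Set X} {y : X} (hy : y ∈ s) (x : X) (ρ : ℝ) :
    cutoffInfDist s x ρ y = 0 := by
  simp [cutoffInfDist, infDist_zero_of_mem hy]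

lemma cutoffInfDist_eq_infDist {s : Set X} {x y : X} {ρ : ℝ} (h : infDist y s + dist y x ≤ ρ) :
    cutoffInfDist s x ρ y = infDist y s :=
  min_eq_left (le_max_of_le_right (by linarith))

end TestFunction

lemma abs_le_of_lipschitzWith_of_support_subset {E : Type*} [NormedAddCommGroup E]
    [NormedSpace ℝ E] [Nontrivial E] {g : E → ℝ} (hg : LipschitzWith 1 g) {x : E} {R : ℝ}
    (hR : 0 ≤ R) (hgs : Function.support g ⊆ closedBall x R) (y : E) : |g y| ≤ 2 * R + 1 := by
  have hzero : ∀ z ∉ closedBall x R, g z = 0 := fun z hz =>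
    Function.notMem_support.1 (hz ∘ (hgs ·))
  by_cases hy : y ∈ closedBall x R
  · obtain ⟨z, hz⟩ := (NormedSpace.sphere_nonempty (x := x) (r := R + 1)).2 (by linarith)
    have hzB : z ∉ closedBall x R := by
      rw [mem_sphere] at hz; rw [mem_closedBall]; linarith
    calc |g y| = dist (g y) (g z) := by rw [hzero z hzB, Real.dist_eq, sub_zero]
      _ ≤ dist y z := by simpa using hg.dist_le_mul y z
      _ ≤ dist y x + dist z x := dist_triangle_right y z x
      _ ≤ 2 * R + 1 := by rw [mem_sphere.1 hz]; linarith [mem_closedBall.1 hy]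
  · rw [hzero y hy, abs_zero]; linarith

lemma exists_isAffinePlane_mem {d n : ℕ} (hnd : n ≤ d) (x : Ed d) :
    ∃ L : AffineSubspace ℝ (Ed d), IsAffinePlane d n L ∧ x ∈ L := by
  obtain ⟨v, hv⟩ := exists_linearIndependent_of_le_finrank (R := ℝ) (M := Ed d) (n := n)
    (by simpa using hnd)
  refine ⟨AffineSubspace.mk' x (Submodule.span ℝ (range v)),
    ⟨⟨x, AffineSubspace.self_mem_mk' _ _⟩, ?_⟩, AffineSubspace.self_mem_mk' _ _⟩
  rw [AffineSubspace.direction_mk', finrank_span_eq_card hv, Fintype.card_fin]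

lemma IsAffinePlane.hausdorffMeasure_inter_lt_top {d n : ℕ} {L : AffineSubspace ℝ (Ed d)}
    (hL : IsAffinePlane d n L) {K : Set (Ed d)} (hK : IsCompact K) :
    μH[(n : ℝ)] (K ∩ L) < ∞ := by
  obtain ⟨⟨p, hp⟩, hdim⟩ := hL
  set e : L.direction → Ed d := fun v => (v : Ed d) + p
  have he : Isometry e := Isometry.of_dist_eq fun v w => by simp [e]; rfl
  have hsub : K ∩ L ⊆ e '' (e ⁻¹' K) := fun y ⟨hyK, hyL⟩ =>
    ⟨⟨y - p, AffineSubspace.vsub_mem_direction hyL hp⟩, by simpa [e] using hyK, by simp [e]⟩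
  calc μH[(n : ℝ)] (K ∩ L) ≤ μH[(n : ℝ)] (e '' (e ⁻¹' K)) := measure_mono hsub
    _ = μH[(n : ℝ)] (e ⁻¹' K) := he.hausdorffMeasure_image (Or.inl n.cast_nonneg) _
    _ < ∞ := by
      subst hdim
      exact (he.isClosedEmbedding.isCompact_preimage hK).measure_lt_top

-- `distB` is an `sSup`, which is `0` for a family unbounded above; finiteness of `σ` and `ν`
-- on the ball is what bounds the family.
lemma abs_integral_sub_le_distB {d : ℕ} [Nontrivial (Ed d)] {σ ν : Measure (Ed d)} {x : Ed d}
    {R : ℝ} (hR : 0 ≤ R) (hσ : σ (closedBall x R) < ∞) (hν : ν (closedBall x R) < ∞)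
    {f : Ed d → ℝ} (hf : LipschitzWith 1 f) (hfs : Function.support f ⊆ closedBall x R) :
    |∫ y, f y ∂σ - ∫ y, f y ∂ν| ≤ distB d (closedBall x R) σ ν := by
  have hint : ∀ ρ : Measure (Ed d), ρ (closedBall x R) < ∞ → ∀ g : Ed d → ℝ,
      LipschitzWith 1 g → Function.support g ⊆ closedBall x R →
      |∫ y, g y ∂ρ| ≤ (2 * R + 1) * ρ.real (closedBall x R) := by
    intro ρ hρ g hg hgs
    rw [← setIntegral_eq_integral_of_forall_compl_eq_zero
      fun z hz => Function.notMem_support.1 (hz ∘ (hgs ·))]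
    simpa only [Real.norm_eq_abs] using norm_setIntegral_le_of_norm_le_const (f := g) hρ
      fun z _ => (Real.norm_eq_abs (g z)).trans_le
        (abs_le_of_lipschitzWith_of_support_subset hg hR hgs z)
  refine le_csSup ⟨(2 * R + 1) * σ.real (closedBall x R) + (2 * R + 1) * ν.real (closedBall x R),
    ?_⟩ ⟨f, hf, hfs, rfl⟩
  rintro t ⟨g, hg, hgs, rfl⟩
  exact (abs_sub _ _).trans (add_le_add (hint σ hσ g hg hgs) (hint ν hν g hg hgs))

lemma setIntegral_infDist_le_distB {d n : ℕ} [Nontrivial (Ed d)] (μ : Measure (Ed d))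
    [IsLocallyFiniteMeasure μ] {x : Ed d} {r R ρ : ℝ} (hr : 0 ≤ r) (hρ : 2 * r + R ≤ ρ)
    (a : ℝ≥0) {L : AffineSubspace ℝ (Ed d)} (hL : IsAffinePlane d n L)
    (hLx : ((L : Set (Ed d)) ∩ closedBall x R).Nonempty) :
    ∫ y in closedBall x r, infDist y (L : Set (Ed d)) ∂μ ≤
      distB d (closedBall x ρ) μ ((a : ℝ≥0∞) • (μH[(n : ℝ)]).restrict (L : Set (Ed d))) := by
  set ν := (a : ℝ≥0∞) • (μH[(n : ℝ)]).restrict (L : Set (Ed d))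
  set f := cutoffInfDist (L : Set (Ed d)) x ρ
  obtain ⟨z, hzL, hzx⟩ := hLx
  have hf_eq : ∀ y ∈ closedBall x r, f y = infDist y L := fun y hy =>
    cutoffInfDist_eq_infDist <| by
      linarith [infDist_le_dist_of_mem hzL (x := y), dist_triangle_right y z x,
        mem_closedBall.1 hy, mem_closedBall.1 hzx]
  have hfν : ∫ y, f y ∂ν = 0 := by
    rw [integral_smul_measure, setIntegral_eq_zero_of_forall_eq_zero
      fun y hy => cutoffInfDist_of_mem hy x ρ, smul_zero]
  have hνB : ν (closedBall x ρ) < ∞ := by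
    rw [Measure.smul_apply, Measure.restrict_apply measurableSet_closedBall, smul_eq_mul]
    exact ENNReal.mul_lt_top ENNReal.coe_lt_top
      (hL.hausdorffMeasure_inter_lt_top (isCompact_closedBall x ρ))
  have hf_int : Integrable f μ := (lipschitzWith_cutoffInfDist _ x ρ).continuous
    |>.integrable_of_hasCompactSupport <| HasCompactSupport.intro' (isCompact_closedBall x ρ)
      isClosed_closedBall fun y hy => Function.notMem_support.1
        (hy ∘ (support_cutoffInfDist_subset _ x ρ ·))
  calc ∫ y in closedBall x r, infDist y (L : Set (Ed d)) ∂μ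
      = ∫ y in closedBall x r, f y ∂μ :=
        setIntegral_congr_fun measurableSet_closedBall fun y hy => (hf_eq y hy).symm
    _ ≤ ∫ y, f y ∂μ :=
        setIntegral_le_integral hf_int (.of_forall (cutoffInfDist_nonneg _ x ρ))
    _ = |∫ y, f y ∂μ - ∫ y, f y ∂ν| := by
        rw [hfν, sub_zero, abs_of_nonneg (integral_nonneg (cutoffInfDist_nonneg _ x ρ))]
    _ ≤ distB d (closedBall x ρ) μ ν :=
        abs_integral_sub_le_distB (by linarith [dist_nonneg.trans (mem_closedBall.1 hzx)])
          measure_closedBall_lt_top hνB (lipschitzWith_cutoffInfDist _ x ρ)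
          (support_cutoffInfDist_subset _ x ρ)

lemma betaP_one_le {d n : ℕ} (μ : Measure (Ed d)) (x : Ed d) {r : ℝ} (hr : 0 < r)
    {L : AffineSubspace ℝ (Ed d)} (hL : IsAffinePlane d n L) :
    betaP d n 1 μ x r ≤ (∫ y in closedBall x r, infDist y (L : Set (Ed d)) ∂μ) / r ^ (n + 1) := by
  have hbdd : BddBelow {b : ℝ | ∃ L : AffineSubspace ℝ (Ed d), IsAffinePlane d n L ∧
      b = (1 / r ^ n * ∫ y in closedBall x r,
        (infDist y (L : Set (Ed d)) / r) ^ (1 : ℝ) ∂μ) ^ (1 / (1 : ℝ))} := by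
    refine ⟨0, ?_⟩
    rintro b ⟨L', -, rfl⟩
    simp only [Real.rpow_one, div_one]
    exact mul_nonneg (by positivity) (integral_nonneg fun y => div_nonneg infDist_nonneg hr.le)
  calc betaP d n 1 μ x r
      ≤ (1 / r ^ n * ∫ y in closedBall x r,
          (infDist y (L : Set (Ed d)) / r) ^ (1 : ℝ) ∂μ) ^ (1 / (1 : ℝ)) :=
        csInf_le hbdd ⟨L, hL, rfl⟩
    _ = _ := by
        simp only [Real.rpow_one, div_one, integral_div]
        field_simp
        ring

theorem stmt8_general (d n : ℕ) (hnd : n < d) :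
    ∃ c : ℝ, 0 < c ∧
      ∀ μ : Measure (Ed d), IsLocallyFiniteMeasure μ →
        ∀ x ∈ msupport d μ, ∀ r : ℝ, 0 < r →
          betaP d n 1 μ x r ≤ c * alphaC d n μ x (2 * r) := by
  have : Nonempty (Fin d) := ⟨⟨0, by omega⟩⟩
  refine ⟨2 ^ (n + 1), by positivity, fun μ _ x _ r hr => ?_⟩
  set S := {t : ℝ | ∃ (a : ℝ≥0) (L : AffineSubspace ℝ (Ed d)), IsAffinePlane d n L ∧
      ((L : Set (Ed d)) ∩ closedBall x (2 * r)).Nonempty ∧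
      t = distB d (closedBall x (3 * (2 * r))) μ
            ((a : ℝ≥0∞) • (μH[(n : ℝ)]).restrict (L : Set (Ed d)))}
  have hS : S.Nonempty := by
    obtain ⟨L, hL, hxL⟩ := exists_isAffinePlane_mem hnd.le x
    exact ⟨_, 0, L, hL, ⟨x, hxL, mem_closedBall_self (by positivity)⟩, rfl⟩
  have hlow : betaP d n 1 μ x r * r ^ (n + 1) ≤ sInf S := by
    refine le_csInf hS ?_
    rintro t ⟨a, L, hL, hLx, rfl⟩
    rw [← le_div_iff₀ (by positivity)]
    exact (betaP_one_le μ x hr hL).trans <| div_le_div_of_nonneg_right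
      (setIntegral_infDist_le_distB μ hr.le (by linarith) a hL hLx) (by positivity)
  calc betaP d n 1 μ x r ≤ sInf S / r ^ (n + 1) := (le_div_iff₀ (by positivity)).2 hlow
    _ = 2 ^ (n + 1) * alphaC d n μ x (2 * r) := by
        rw [show alphaC d n μ x (2 * r) = 1 / (2 * r) ^ (n + 1) * sInf S from rfl, mul_pow]
        field_simp

/-- There is `c = c(n,d)` such that `β_{μ,1}^n(x,r) ≤ c α_μ^n(x,2r)` for every
Radon measure `μ` on `ℝ^d`, every `x ∈ supp μ` and every `r > 0`. -/
theorem stmt8 (d n : ℕ) (hn : 0 < n) (hnd : n < d) :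
    ∃ c : ℝ, 0 < c ∧
      ∀ μ : Measure (Ed d), IsLocallyFiniteMeasure μ →
        ∀ x ∈ msupport d μ, ∀ r : ℝ, 0 < r →
          betaP d n 1 μ x r ≤ c * alphaC d n μ x (2 * r) :=
  stmt8_general d n hnd

end
end

section
/- Let 0 < n < d be integers, 1 ≤ p < 2 and μ a Radon measure on ℝ^d. Then for every x ∈ ℝ^d, ∫₀^∞ β_{μ,p}^n(x,r)² dr/r ≤ ( sup_{r>0} μ(B̄(x,r))/r^n )^{2/p − 1} · ∫₀^∞ β_{μ,2}^n(x,r)² dr/r. -/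
open MeasureTheory Metric Set
open scoped ENNReal NNReal

noncomputable section

/-!
For a fixed plane `L`, the quantity inside the infimum defining `β_{μ,p}^n(x,r)` is
`r^{-n/p} ‖dist(·,L)/r‖_{L^p(μ⌊B̄(x,r))}`. On the finite measure `μ⌊B̄(x,r)` Hölder's inequality
gives `‖f‖_p ≤ μ(B̄(x,r))^{1/p-1/2} ‖f‖_2`, hence, after taking infima over `L`,
`β_p(x,r) ≤ (μ(B̄(x,r))/r^n)^{1/p-1/2} β_2(x,r)`. Squaring and bounding the density ratio by its
supremum over `r` gives the claim. The ratio `r ↦ μ(B̄(x,r))/r^n` is measurable (its numerator is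
monotone) and finite, which is what makes the integral bound work even when the supremum is `∞`
and `r ↦ β_2(x,r)` is not known to be measurable.
-/

namespace MeasureTheory

variable {α E : Type*} [MeasurableSpace α] [NormedAddCommGroup E] {μ : Measure α}

theorem lpNorm_le_lpNorm_mul_measureReal_univ_rpow [IsFiniteMeasure μ] {f : α → E}
    {p q : ℝ≥0∞} (hpq : p ≤ q) (hf : MemLp f q μ) :
    lpNorm f p μ ≤ lpNorm f q μ * μ.real univ ^ (1 / p.toReal - 1 / q.toReal) := by
  rcases eq_or_ne p 0 with rfl | hp
  · simpa using mul_nonneg lpNorm_nonneg (by positivity)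
  have hexp : 0 ≤ 1 / p.toReal - 1 / q.toReal := by
    rcases eq_or_ne q ⊤ with rfl | hq
    · simp
    exact sub_nonneg.2 (one_div_le_one_div_of_le
      (ENNReal.toReal_pos hp (ne_top_of_le_ne_top hq hpq)) (ENNReal.toReal_mono hq hpq))
  have h := eLpNorm_le_eLpNorm_mul_rpow_measure_univ hpq hf.1
  have hfin : eLpNorm f q μ * μ univ ^ (1 / p.toReal - 1 / q.toReal) ≠ ⊤ :=
    ENNReal.mul_ne_top hf.2.ne
      (ENNReal.rpow_ne_top_of_nonneg hexp (measure_ne_top μ univ))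
  rw [← toReal_eLpNorm hf.1, ← toReal_eLpNorm hf.1, measureReal_def, ENNReal.toReal_rpow,
    ← ENNReal.toReal_mul]
  exact ENNReal.toReal_mono hfin h

theorem lintegral_mul_le_mul_lintegral_of_ae_le_of_ne_top {f g : α → ℝ≥0∞} {c : ℝ≥0∞}
    (hc : c ≠ ⊤) (hfc : ∀ᵐ x ∂μ, f x ≤ c) :
    ∫⁻ x, f x * g x ∂μ ≤ c * ∫⁻ x, g x ∂μ :=
  (lintegral_mono_ae (hfc.mono fun _ hx => by gcongr)).trans_eq (lintegral_const_mul' c g hc)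

theorem lintegral_mul_le_mul_lintegral_of_ae_le {f g : α → ℝ≥0∞} {c : ℝ≥0∞}
    (hf : Measurable f) (hf_top : ∀ᵐ x ∂μ, f x ≠ ⊤) (hfc : ∀ᵐ x ∂μ, f x ≤ c) :
    ∫⁻ x, f x * g x ∂μ ≤ c * ∫⁻ x, g x ∂μ := by
  rcases ne_or_eq c ⊤ with hc | rfl
  · exact lintegral_mul_le_mul_lintegral_of_ae_le_of_ne_top hc hfc
  rcases ne_or_eq (∫⁻ x, g x ∂μ) 0 with hg | hg
  · simp [ENNReal.top_mul hg]
  -- `g` need not be measurable, so `⊤ * g` is handled on the measurable pieces `{f ≤ k}`.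
  have hcover : μ.restrict (⋃ k : ℕ, {x | f x ≤ k}) = μ :=
    Measure.restrict_eq_self_of_ae_mem <| hf_top.mono fun x hx =>
      mem_iUnion.2 ((ENNReal.exists_nat_gt hx).imp fun _ hk => hk.le)
  calc ∫⁻ x, f x * g x ∂μ = ∫⁻ x in ⋃ k : ℕ, {x | f x ≤ k}, f x * g x ∂μ := by rw [hcover]
    _ ≤ ∑' k : ℕ, ∫⁻ x in {x | f x ≤ k}, f x * g x ∂μ := lintegral_iUnion_le _ _
    _ ≤ ∑' k : ℕ, (k : ℝ≥0∞) * ∫⁻ x, g x ∂μ := by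
      refine ENNReal.tsum_le_tsum fun k => ?_
      refine (lintegral_mul_le_mul_lintegral_of_ae_le_of_ne_top (ENNReal.natCast_ne_top k)
        (ae_restrict_mem (hf measurableSet_Iic))).trans
        (mul_le_mul_right (setLIntegral_le_lintegral _ _) _)
    _ = ⊤ * ∫⁻ x, g x ∂μ := by simp [hg]

end MeasureTheory

section Beta

variable {d n : ℕ} {p : ℝ} {μ : Measure (Ed d)} {x : Ed d} {r : ℝ}

def planeBeta (d n : ℕ) (p : ℝ) (μ : Measure (Ed d)) (x : Ed d) (r : ℝ)
    (L : AffineSubspace ℝ (Ed d)) : ℝ :=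
  (1 / r ^ n * ∫ y in closedBall x r, (Metric.infDist y (L : Set (Ed d)) / r) ^ p ∂μ) ^ (1 / p)

theorem betaP_eq_iInf :
    betaP d n p μ x r = ⨅ L : {L // IsAffinePlane d n L}, planeBeta d n p μ x r L := by
  rw [betaP, iInf]
  congr 1
  ext b
  simp [planeBeta, eq_comm]

theorem nonempty_isAffinePlane (hnd : n ≤ d) : Nonempty {L // IsAffinePlane d n L} := by
  obtain ⟨v, hv⟩ := exists_linearIndependent_of_le_finrank (R := ℝ) (M := Ed d)
    (hnd.trans_eq finrank_euclideanSpace_fin.symm)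
  refine ⟨(Submodule.span ℝ (range v)).toAffineSubspace, ⟨0, ?_⟩, ?_⟩
  · exact Submodule.mem_toAffineSubspace.2 (Submodule.zero_mem _)
  · rw [Submodule.toAffineSubspace_direction, finrank_span_eq_card hv, Fintype.card_fin]

theorem planeBeta_nonneg (hr : 0 ≤ r) (L : AffineSubspace ℝ (Ed d)) :
    0 ≤ planeBeta d n p μ x r L :=
  Real.rpow_nonneg (mul_nonneg (by positivity)
    (integral_nonneg fun _ => Real.rpow_nonneg (div_nonneg infDist_nonneg hr) p)) _

theorem betaP_nonneg (hr : 0 ≤ r) : 0 ≤ betaP d n p μ x r := by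
  rw [betaP_eq_iInf]
  exact Real.iInf_nonneg fun L => planeBeta_nonneg hr L.1

theorem planeBeta_eq_mul_lpNorm (hp : 0 < p) (hr : 0 ≤ r) (L : AffineSubspace ℝ (Ed d)) :
    planeBeta d n p μ x r L = (1 / r ^ n) ^ (1 / p) *
      lpNorm (fun y => infDist y (L : Set (Ed d)) / r) (ENNReal.ofReal p)
        (μ.restrict (closedBall x r)) := by
  have hnorm (y : Ed d) : ‖infDist y (L : Set (Ed d)) / r‖ = infDist y L / r :=
    Real.norm_of_nonneg (div_nonneg infDist_nonneg hr)
  rw [planeBeta, lpNorm_eq_integral_norm_rpow_toReal (by simpa using hp) ENNReal.ofReal_ne_top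
    ((continuous_infDist_pt _).div_const r).aestronglyMeasurable, ENNReal.toReal_ofReal hp.le,
    Real.mul_rpow (by positivity)
      (integral_nonneg fun _ => Real.rpow_nonneg (div_nonneg infDist_nonneg hr) p), one_div p]
  simp only [hnorm]

theorem planeBeta_le_mul_planeBeta_two [IsLocallyFiniteMeasure μ] (hp : 0 < p) (hp2 : p ≤ 2)
    (hr : 0 < r) (L : AffineSubspace ℝ (Ed d)) :
    planeBeta d n p μ x r L ≤
      (μ.real (closedBall x r) / r ^ n) ^ (1 / p - 1 / 2) * planeBeta d n 2 μ x r L := by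
  set F : Ed d → ℝ := fun y => infDist y (L : Set (Ed d)) / r
  have hFc : Continuous F := (continuous_infDist_pt _).div_const r
  have : IsFiniteMeasure (μ.restrict (closedBall x r)) :=
    isFiniteMeasure_restrict.2 measure_closedBall_lt_top.ne
  have hF : MemLp F (ENNReal.ofReal 2) (μ.restrict (closedBall x r)) := by
    obtain ⟨C, hC⟩ := (isCompact_closedBall x r).exists_bound_of_continuousOn hFc.continuousOn
    exact .of_bound hFc.aestronglyMeasurable C
      (ae_restrict_of_forall_mem measurableSet_closedBall hC)
  have holder := lpNorm_le_lpNorm_mul_measureReal_univ_rpow (ENNReal.ofReal_le_ofReal hp2) hF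
  rw [ENNReal.toReal_ofReal hp.le, ENNReal.toReal_ofReal zero_le_two,
    measureReal_restrict_apply_univ] at holder
  have hsplit :
      (1 / r ^ n) ^ (1 / p) = (1 / r ^ n) ^ (1 / p - 1 / 2) * (1 / r ^ n) ^ (1 / 2 : ℝ) := by
    rw [← Real.rpow_add (by positivity), sub_add_cancel]
  rw [planeBeta_eq_mul_lpNorm hp hr.le, planeBeta_eq_mul_lpNorm two_pos hr.le]
  calc (1 / r ^ n) ^ (1 / p) * lpNorm F (ENNReal.ofReal p) (μ.restrict (closedBall x r))
      ≤ (1 / r ^ n) ^ (1 / p) * (lpNorm F (ENNReal.ofReal 2) (μ.restrict (closedBall x r)) *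
          μ.real (closedBall x r) ^ (1 / p - 1 / 2)) := by gcongr
    _ = _ := by
      rw [hsplit, div_eq_mul_one_div (μ.real _), Real.mul_rpow measureReal_nonneg (by positivity)]
      ring

theorem betaP_le_mul_betaP_two [IsLocallyFiniteMeasure μ] (hnd : n ≤ d) (hp : 0 < p)
    (hp2 : p ≤ 2) (hr : 0 < r) :
    betaP d n p μ x r ≤
      (μ.real (closedBall x r) / r ^ n) ^ (1 / p - 1 / 2) * betaP d n 2 μ x r := by
  have := nonempty_isAffinePlane hnd
  rw [betaP_eq_iInf, betaP_eq_iInf, Real.mul_iInf_of_nonneg (by positivity)]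
  have hbdd : BddBelow (range fun L : {L // IsAffinePlane d n L} => planeBeta d n p μ x r L) :=
    ⟨0, forall_mem_range.2 fun L => planeBeta_nonneg hr.le L.1⟩
  exact le_ciInf fun L =>
    (ciInf_le hbdd L).trans (planeBeta_le_mul_planeBeta_two hp hp2 hr L.1)

theorem ofReal_betaP_sq_div_le [IsLocallyFiniteMeasure μ] (hnd : n ≤ d) (hp : 0 < p)
    (hp2 : p ≤ 2) (hr : 0 < r) :
    ENNReal.ofReal (betaP d n p μ x r ^ 2 / r) ≤
      (μ (closedBall x r) / ENNReal.ofReal (r ^ n)) ^ (2 / p - 1) *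
        ENNReal.ofReal (betaP d n 2 μ x r ^ 2 / r) := by
  set m := μ.real (closedBall x r) / r ^ n
  have hm : 0 ≤ m := by positivity
  have hexp : 0 ≤ 2 / p - 1 := by rw [sub_nonneg, le_div_iff₀ hp]; linarith
  have hdensity : μ (closedBall x r) / ENNReal.ofReal (r ^ n) = ENNReal.ofReal m := by
    rw [ENNReal.ofReal_div_of_pos (by positivity), measureReal_def,
      ENNReal.ofReal_toReal measure_closedBall_lt_top.ne]
  have hsq : betaP d n p μ x r ^ 2 ≤ m ^ (2 / p - 1) * betaP d n 2 μ x r ^ 2 :=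
    calc betaP d n p μ x r ^ 2 ≤ (m ^ (1 / p - 1 / 2) * betaP d n 2 μ x r) ^ 2 :=
          pow_le_pow_left₀ (betaP_nonneg hr.le) (betaP_le_mul_betaP_two hnd hp hp2 hr) 2
      _ = m ^ (2 / p - 1) * betaP d n 2 μ x r ^ 2 := by
          rw [mul_pow, ← Real.rpow_natCast (m ^ _), ← Real.rpow_mul hm]
          ring_nf
  rw [hdensity, ENNReal.ofReal_rpow_of_nonneg hm hexp, ← ENNReal.ofReal_mul (by positivity),
    ← mul_div_assoc]
  exact ENNReal.ofReal_le_ofReal (div_le_div_of_nonneg_right hsq hr.le)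

end Beta

theorem stmt10_general (d n : ℕ) (hnd : n < d) (p : ℝ) (hp1 : 1 ≤ p) (hp2 : p < 2)
    (μ : Measure (Ed d)) [IsLocallyFiniteMeasure μ] (x : Ed d) :
    jonesBeta d n p μ x ≤
      (⨆ r : {r : ℝ // 0 < r}, μ (closedBall x (r : ℝ)) / ENNReal.ofReal ((r : ℝ) ^ n)) ^
          (2 / p - 1) *
        jonesBeta d n 2 μ x := by
  have hp : 0 < p := by linarith
  have hexp : 0 ≤ 2 / p - 1 := by rw [sub_nonneg, le_div_iff₀ hp]; linarith
  set density : ℝ → ℝ≥0∞ := fun r => μ (closedBall x r) / ENNReal.ofReal (r ^ n)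
  have hmeas : Measurable fun r => density r ^ (2 / p - 1) :=
    ((Monotone.measurable fun _ _ hab => measure_mono (closedBall_subset_closedBall hab)).div
      (by fun_prop)).pow_const _
  have hfin (r : ℝ) (hr : r ∈ Ioi 0) : density r ^ (2 / p - 1) ≠ ⊤ :=
    ENNReal.rpow_ne_top_of_nonneg hexp <| ENNReal.div_ne_top measure_closedBall_lt_top.ne
      (ENNReal.ofReal_pos.2 (pow_pos hr n)).ne'
  have hle_iSup (r : ℝ) (hr : r ∈ Ioi 0) :
      density r ^ (2 / p - 1) ≤ (⨆ s : {r : ℝ // 0 < r}, density s) ^ (2 / p - 1) :=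
    ENNReal.rpow_le_rpow (le_iSup (fun s : {r : ℝ // 0 < r} => density s) ⟨r, hr⟩) hexp
  calc jonesBeta d n p μ x
      ≤ ∫⁻ r in Ioi 0, density r ^ (2 / p - 1) * ENNReal.ofReal (betaP d n 2 μ x r ^ 2 / r) :=
        setLIntegral_mono' measurableSet_Ioi fun r hr =>
          ofReal_betaP_sq_div_le hnd.le hp hp2.le hr
    _ ≤ _ := lintegral_mul_le_mul_lintegral_of_ae_le hmeas
        ((ae_restrict_mem measurableSet_Ioi).mono hfin)
        ((ae_restrict_mem measurableSet_Ioi).mono hle_iSup)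

/-- For `1 ≤ p < 2` and a Radon measure `μ` on `ℝ^d`, for every `x`,
`∫₀^∞ β_{μ,p}^n(x,r)² dr/r ≤ (sup_{r>0} μ(B̄(x,r))/r^n)^{2/p − 1} ∫₀^∞ β_{μ,2}^n(x,r)² dr/r`. -/
theorem stmt10 (d n : ℕ) (hn : 0 < n) (hnd : n < d) (p : ℝ) (hp1 : 1 ≤ p) (hp2 : p < 2)
    (μ : Measure (Ed d)) [IsLocallyFiniteMeasure μ] (x : Ed d) :
    jonesBeta d n p μ x ≤
      (⨆ r : {r : ℝ // 0 < r}, μ (closedBall x (r : ℝ)) / ENNReal.ofReal ((r : ℝ) ^ n)) ^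
          (2 / p - 1) *
        jonesBeta d n 2 μ x :=
  stmt10_general d n hnd p hp1 hp2 μ x
end
end

section
/- In the stopping construction below, there is a constant c₇ = c₇(n) > 0 such that if M > max(N, c₇⁻¹·4N), then: (i) every cube Q ∈ HD₀ satisfies Q ∩ A = ∅; (ii) every cube Q ∈ LD₀ satisfies Q ∩ A = ∅. Consequently R ∩ ∪_{Q∈Stop} Q ⊂ (R \ A) ∪ (R \ F), and hence μ(R ∩ ∪_{Q∈Stop} Q) ≤ μ(R \ A) + μ(R \ F). -/
open MeasureTheory Metric Set
open scoped ENNReal NNReal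

noncomputable section

/-! ### The stopping construction of Section 3.

Parameters: a measure `μ` on `ℝ^d`, a dyadic cube `R = Q(kR,mR)`, and constants `N ≥ 1`,
`r₀ > 0`, `M > N`. -/

/-- The set `A = {x ∈ R : N⁻¹ r^n ≤ μ(B(x,r)) ≤ 4N r^n for all 0 < r ≤ r₀}`. -/
def stopA (d n : ℕ) (μ : Measure (Ed d)) (kR : ℤ) (mR : Fin d → ℤ) (N r₀ : ℝ) :
    Set (Ed d) :=
  { x ∈ dyadicCube d kR mR | ∀ r : ℝ, 0 < r → r ≤ r₀ →
      ENNReal.ofReal (N⁻¹ * r ^ n) ≤ μ (ball x r) ∧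
      μ (ball x r) ≤ ENNReal.ofReal (4 * N * r ^ n) }

/-- The set `F = {x ∈ R ∩ supp μ : ∫₀^∞ α_μ^n(x,r)² dr/r ≤ N}`. -/
def stopF (d n : ℕ) (μ : Measure (Ed d)) (kR : ℤ) (mR : Fin d → ℤ) (N : ℝ) : Set (Ed d) :=
  { x ∈ dyadicCube d kR mR ∩ msupport d μ | jonesAlpha d n μ x ≤ ENNReal.ofReal N }

/-- `Q(k,m) ∈ HD₀`: `Q ⊆ 3R`, `diam Q ≤ r₀/10` and `μ(B_Q) ≥ M ℓ(Q)^n`. -/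
def memHD0 (d n : ℕ) (μ : Measure (Ed d)) (kR : ℤ) (mR : Fin d → ℤ) (r₀ M : ℝ)
    (k : ℤ) (m : Fin d → ℤ) : Prop :=
  dyadicCube d k m ⊆ cubeDilate d 3 kR mR ∧
  Metric.diam (dyadicCube d k m) ≤ r₀ / 10 ∧
  ENNReal.ofReal (M * ((2 : ℝ) ^ k) ^ n) ≤ μ (ballBQ d k m)

/-- `Q(k,m) ∈ LD₀`: `Q ⊆ 3R`, `diam Q ≤ r₀/10` and `μ(3Q) ≤ M⁻¹ ℓ(Q)^n`. -/
def memLD0 (d n : ℕ) (μ : Measure (Ed d)) (kR : ℤ) (mR : Fin d → ℤ) (r₀ M : ℝ)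
    (k : ℤ) (m : Fin d → ℤ) : Prop :=
  dyadicCube d k m ⊆ cubeDilate d 3 kR mR ∧
  Metric.diam (dyadicCube d k m) ≤ r₀ / 10 ∧
  μ (cubeDilate d 3 k m) ≤ ENNReal.ofReal (M⁻¹ * ((2 : ℝ) ^ k) ^ n)

/-- `Q(k,m) ∈ BA₀`: `Q ⊆ 3R`, `diam Q ≤ r₀/10`, `Q ∉ HD₀ ∪ LD₀` and `Q ∩ F = ∅`. -/
def memBA0 (d n : ℕ) (μ : Measure (Ed d)) (kR : ℤ) (mR : Fin d → ℤ) (N r₀ M : ℝ)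
    (k : ℤ) (m : Fin d → ℤ) : Prop :=
  dyadicCube d k m ⊆ cubeDilate d 3 kR mR ∧
  Metric.diam (dyadicCube d k m) ≤ r₀ / 10 ∧
  ¬ memHD0 d n μ kR mR r₀ M k m ∧ ¬ memLD0 d n μ kR mR r₀ M k m ∧
  dyadicCube d k m ∩ stopF d n μ kR mR N = ∅

/-- `Q(k,m) ∈ Stop`: a maximal dyadic cube of `HD₀ ∪ LD₀ ∪ BA₀`. -/
def memStop (d n : ℕ) (μ : Measure (Ed d)) (kR : ℤ) (mR : Fin d → ℤ) (N r₀ M : ℝ)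
    (k : ℤ) (m : Fin d → ℤ) : Prop :=
  (memHD0 d n μ kR mR r₀ M k m ∨ memLD0 d n μ kR mR r₀ M k m ∨
    memBA0 d n μ kR mR N r₀ M k m) ∧
  ∀ (k' : ℤ) (m' : Fin d → ℤ),
    (memHD0 d n μ kR mR r₀ M k' m' ∨ memLD0 d n μ kR mR r₀ M k' m' ∨
      memBA0 d n μ kR mR N r₀ M k' m') →
    dyadicCube d k m ⊆ dyadicCube d k' m' → dyadicCube d k m = dyadicCube d k' m'

/-- `Q(k,m) ∈ 𝒢`: a dyadic cube with `diam Q ≤ r₀/10` not contained in any cube of `Stop`. -/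
def memGood (d n : ℕ) (μ : Measure (Ed d)) (kR : ℤ) (mR : Fin d → ℤ) (N r₀ M : ℝ)
    (k : ℤ) (m : Fin d → ℤ) : Prop :=
  Metric.diam (dyadicCube d k m) ≤ r₀ / 10 ∧
  ∀ (k' : ℤ) (m' : Fin d → ℤ), memStop d n μ kR mR N r₀ M k' m' →
    ¬ dyadicCube d k m ⊆ dyadicCube d k' m'

lemma coord_abs_le_dist (d : ℕ) (x y : Ed d) (i : Fin d) : |x i - y i| ≤ dist x y := by
  rw [EuclideanSpace.dist_eq, ← Real.sqrt_sq_eq_abs]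
  apply Real.sqrt_le_sqrt
  rw [show (x i - y i)^2 = dist (x i) (y i)^2 by rw [Real.dist_eq, sq_abs]]
  exact Finset.single_le_sum (f := fun j => dist (x j) (y j)^2) (fun j _ => sq_nonneg _) (Finset.mem_univ i)

lemma dist_le_of_coord (d : ℕ) (x y : Ed d) (a : ℝ) (ha : 0 ≤ a)
    (h : ∀ i, |x i - y i| ≤ a) : dist x y ≤ Real.sqrt d * a := by
  rw [EuclideanSpace.dist_eq, ← Real.sqrt_sq ha, ← Real.sqrt_mul (by positivity)]
  apply Real.sqrt_le_sqrt
  calc ∑ i : Fin d, dist (x i) (y i) ^ 2 ≤ ∑ _i : Fin d, a ^ 2 := by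
        apply Finset.sum_le_sum
        intro i _
        rw [Real.dist_eq]
        exact pow_le_pow_left₀ (abs_nonneg _) (h i) 2
    _ = d * a ^ 2 := by simp [Finset.sum_const, mul_comm]

lemma dcenter_apply (d : ℕ) (k : ℤ) (m : Fin d → ℤ) (i : Fin d) :
    dyadicCenter d k m i = ((m i : ℝ) + 1 / 2) * 2 ^ k := rfl

lemma center_mem (d : ℕ) (k : ℤ) (m : Fin d → ℤ) : dyadicCenter d k m ∈ dyadicCube d k m := by
  intro i
  have h : (0:ℝ) < 2 ^ k := by positivity
  rw [dcenter_apply]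
  constructor <;> nlinarith

lemma cube_bounded (d : ℕ) (k : ℤ) (m : Fin d → ℤ) :
    dyadicCube d k m ⊆ closedBall (dyadicCenter d k m) (Real.sqrt d * 2 ^ k) := by
  intro x hx
  rw [mem_closedBall]
  apply dist_le_of_coord _ _ _ _ (by positivity)
  intro i
  have h : (0:ℝ) < 2 ^ k := by positivity
  have := hx i
  rw [dcenter_apply, abs_le]
  constructor <;> nlinarith [this.1, this.2]

lemma cube_isBounded (d : ℕ) (k : ℤ) (m : Fin d → ℤ) : Bornology.IsBounded (dyadicCube d k m) :=
  (Metric.isBounded_closedBall).subset (cube_bounded d k m)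

lemma diam_le (d : ℕ) (k : ℤ) (m : Fin d → ℤ) :
    Metric.diam (dyadicCube d k m) ≤ Real.sqrt d * 2 ^ k := by
  apply Metric.diam_le_of_forall_dist_le (by positivity)
  intro x hx y hy
  apply dist_le_of_coord _ _ _ _ (by positivity)
  intro i
  have h1 := hx i; have h2 := hy i
  rw [abs_le]
  constructor <;> nlinarith [h1.1, h1.2, h2.1, h2.2]

lemma le_diam (d : ℕ) (hd : 0 < d) (k : ℤ) (m : Fin d → ℤ) :
    (2:ℝ) ^ k ≤ Metric.diam (dyadicCube d k m) := by
  have hℓ : (0:ℝ) < 2 ^ k := by positivity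
  -- points p t : coordinates m i * 2^k, except coord 0 shifted by t*2^k
  have key : ∀ t : ℝ, 0 ≤ t → t < 1 → t * 2 ^ k ≤ Metric.diam (dyadicCube d k m) := by
    intro t ht ht1
    set i0 : Fin d := ⟨0, hd⟩
    set p : Ed d := (WithLp.equiv 2 (Fin d → ℝ)).symm (fun i => (m i : ℝ) * 2 ^ k) with hp
    set q : Ed d := (WithLp.equiv 2 (Fin d → ℝ)).symm
      (fun i => if i = i0 then (m i : ℝ) * 2 ^ k + t * 2 ^ k else (m i : ℝ) * 2 ^ k) with hq
    have hpmem : p ∈ dyadicCube d k m := by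
      intro i
      show (m i : ℝ) * 2 ^ k ≤ (m i : ℝ) * 2 ^ k ∧ (m i : ℝ) * 2 ^ k < ((m i : ℝ) + 1) * 2 ^ k
      constructor <;> nlinarith
    have hqmem : q ∈ dyadicCube d k m := by
      intro i
      show (m i : ℝ) * 2 ^ k ≤ (if i = i0 then (m i : ℝ) * 2 ^ k + t * 2 ^ k else (m i : ℝ) * 2 ^ k) ∧
        (if i = i0 then (m i : ℝ) * 2 ^ k + t * 2 ^ k else (m i : ℝ) * 2 ^ k) < ((m i : ℝ) + 1) * 2 ^ k
      split <;> constructor <;> nlinarith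
    have hdist : dist p q = t * 2 ^ k := by
      rw [EuclideanSpace.dist_eq]
      have : ∀ j : Fin d, dist (p j) (q j) ^ 2 = if j = i0 then (t * 2^k)^2 else 0 := by
        intro j
        show dist ((m j : ℝ) * 2 ^ k) (if j = i0 then _ else _) ^ 2 = _
        split
        · rw [Real.dist_eq]
          have : (m j : ℝ) * 2 ^ k - ((m j : ℝ) * 2 ^ k + t * 2 ^ k) = -(t * 2 ^ k) := by ring
          rw [this, abs_neg, abs_of_nonneg (by positivity)]
        · simp [Real.dist_eq]
      rw [Finset.sum_congr rfl (fun j _ => this j), Finset.sum_ite_eq' Finset.univ i0]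
      simp [Real.sqrt_sq (by positivity : (0:ℝ) ≤ t * 2^k)]
    calc t * 2 ^ k = dist p q := hdist.symm
      _ ≤ _ := Metric.dist_le_diam_of_mem (cube_isBounded d k m) hpmem hqmem
  by_contra hcon
  push_neg at hcon
  have hdnn : 0 ≤ Metric.diam (dyadicCube d k m) := Metric.diam_nonneg
  set D := Metric.diam (dyadicCube d k m)
  have ht : D / 2^k < 1 := by rw [div_lt_one hℓ]; linarith
  have := key ((D / 2^k + 1)/2) (by positivity) (by linarith)
  have : D < (D / 2^k + 1)/2 * 2^k := by
    rw [div_mul_eq_mul_div, lt_div_iff₀ (by norm_num : (0:ℝ)<2)]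
    have : D / 2^k * 2^k = D := div_mul_cancel₀ _ hℓ.ne'
    nlinarith
  linarith

lemma ball_subset_dilate (d : ℕ) (k : ℤ) (m : Fin d → ℤ) (x : Ed d)
    (hx : x ∈ dyadicCube d k m) : ball x (2 ^ k) ⊆ cubeDilate d 3 k m := by
  intro z hz
  rw [mem_ball] at hz
  refine ⟨dyadicCenter d k m + (3:ℝ)⁻¹ • (z - dyadicCenter d k m), ?_, ?_⟩
  · intro i
    have hc : ∀ w : Ed d, ∀ c : ℝ, (dyadicCenter d k m + c • (w - dyadicCenter d k m)) i
        = dyadicCenter d k m i + c * (w i - dyadicCenter d k m i) := fun w c => rfl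
    rw [hc]
    have hzi : |z i - x i| ≤ dist z x := coord_abs_le_dist d z x i
    have hzi' : |z i - x i| < 2 ^ k := lt_of_le_of_lt hzi hz
    rw [abs_lt] at hzi'
    have hxi := hx i
    rw [dcenter_apply]
    have hℓ : (0:ℝ) < 2 ^ k := by positivity
    constructor <;> nlinarith [hxi.1, hxi.2, hzi'.1, hzi'.2]
  · show dyadicCenter d k m + (3:ℝ) • (dyadicCenter d k m + (3:ℝ)⁻¹ • (z - dyadicCenter d k m) - dyadicCenter d k m) = z
    rw [add_sub_cancel_left, smul_smul]
    norm_num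

lemma ballBQ_subset (d : ℕ) (hd : 0 < d) (k : ℤ) (m : Fin d → ℤ) (x : Ed d)
    (hx : x ∈ dyadicCube d k m) :
    closedBall (dyadicCenter d k m) (3 * Metric.diam (dyadicCube d k m)) ⊆
      ball x (5 * Metric.diam (dyadicCube d k m)) := by
  have hD : (2:ℝ) ^ k ≤ Metric.diam (dyadicCube d k m) := le_diam d hd k m
  have hℓ : (0:ℝ) < 2 ^ k := by positivity
  intro y hy
  rw [mem_closedBall] at hy
  rw [mem_ball]
  have hxc : dist x (dyadicCenter d k m) ≤ Metric.diam (dyadicCube d k m) :=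
    Metric.dist_le_diam_of_mem (cube_isBounded d k m) hx (center_mem d k m)
  calc dist y x ≤ dist y (dyadicCenter d k m) + dist (dyadicCenter d k m) x := dist_triangle _ _ _
    _ ≤ 3 * Metric.diam (dyadicCube d k m) + Metric.diam (dyadicCube d k m) := by
        rw [dist_comm (dyadicCenter d k m) x]; linarith
    _ < 5 * Metric.diam (dyadicCube d k m) := by linarith

lemma hd_empty (d n : ℕ) (hd : 0 < d) (μ : Measure (Ed d)) (kR : ℤ) (mR : Fin d → ℤ)
    (N r₀ M : ℝ) (hN : 1 ≤ N) (hr₀ : 0 < r₀)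
    (hM4 : (5 * Real.sqrt d) ^ n * (4 * N) < M)
    (k : ℤ) (m : Fin d → ℤ) (hQ : memHD0 d n μ kR mR r₀ M k m) :
    dyadicCube d k m ∩ stopA d n μ kR mR N r₀ = ∅ := by
  rw [eq_empty_iff_forall_notMem]
  rintro x ⟨hxQ, hxA⟩
  obtain ⟨hsub, hdiam, hmass⟩ := hQ
  have hℓ : (0:ℝ) < 2 ^ k := by positivity
  have hsd : (0:ℝ) < Real.sqrt d := Real.sqrt_pos.mpr (by exact_mod_cast hd)
  set D := Metric.diam (dyadicCube d k m) with hDdef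
  have hDge : (2:ℝ) ^ k ≤ D := le_diam d hd k m
  have hDle : D ≤ Real.sqrt d * 2 ^ k := diam_le d k m
  have hDpos : 0 < D := lt_of_lt_of_le hℓ hDge
  have hrr₀ : 5 * D ≤ r₀ := by linarith
  have hup : μ (ball x (5 * D)) ≤ ENNReal.ofReal (4 * N * (5 * D) ^ n) :=
    (hxA.2 (5 * D) (by linarith) hrr₀).2
  have hsubB : ballBQ d k m ⊆ ball x (5 * D) := ballBQ_subset d hd k m x hxQ
  have hchain : ENNReal.ofReal (M * ((2:ℝ) ^ k) ^ n) ≤ ENNReal.ofReal (4 * N * (5 * D) ^ n) :=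
    le_trans hmass (le_trans (measure_mono hsubB) hup)
  have hN0 : (0:ℝ) < N := by linarith
  have hreal : M * ((2:ℝ) ^ k) ^ n ≤ 4 * N * (5 * D) ^ n :=
    (ENNReal.ofReal_le_ofReal_iff (by positivity)).mp hchain
  have h5D : (5 * D) ^ n ≤ (5 * (Real.sqrt d * 2 ^ k)) ^ n :=
    pow_le_pow_left₀ (by positivity) (by linarith) n
  have hfinal : 4 * N * (5 * D) ^ n < M * ((2:ℝ) ^ k) ^ n := by
    calc 4 * N * (5 * D) ^ n ≤ 4 * N * (5 * (Real.sqrt d * 2 ^ k)) ^ n := by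
          apply mul_le_mul_of_nonneg_left h5D (by positivity)
      _ = (5 * Real.sqrt d) ^ n * (4 * N) * ((2:ℝ) ^ k) ^ n := by
          rw [show 5 * (Real.sqrt d * 2 ^ k) = (5 * Real.sqrt d) * 2 ^ k by ring, mul_pow]; ring
      _ < M * ((2:ℝ) ^ k) ^ n := by
          apply mul_lt_mul_of_pos_right hM4 (by positivity)
  linarith

lemma ld_empty (d n : ℕ) (hd : 0 < d) (μ : Measure (Ed d)) (kR : ℤ) (mR : Fin d → ℤ)
    (N r₀ M : ℝ) (hN : 1 ≤ N) (hr₀ : 0 < r₀) (hNM : N < M)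
    (k : ℤ) (m : Fin d → ℤ) (hQ : memLD0 d n μ kR mR r₀ M k m) :
    dyadicCube d k m ∩ stopA d n μ kR mR N r₀ = ∅ := by
  rw [eq_empty_iff_forall_notMem]
  rintro x ⟨hxQ, hxA⟩
  obtain ⟨hsub, hdiam, hmass⟩ := hQ
  have hℓ : (0:ℝ) < 2 ^ k := by positivity
  have hDge : (2:ℝ) ^ k ≤ Metric.diam (dyadicCube d k m) := le_diam d hd k m
  have hrr₀ : (2:ℝ) ^ k ≤ r₀ := by linarith
  have hlow : ENNReal.ofReal (N⁻¹ * ((2:ℝ) ^ k) ^ n) ≤ μ (ball x (2 ^ k)) :=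
    (hxA.2 (2 ^ k) hℓ hrr₀).1
  have hchain : ENNReal.ofReal (N⁻¹ * ((2:ℝ) ^ k) ^ n) ≤ ENNReal.ofReal (M⁻¹ * ((2:ℝ) ^ k) ^ n) :=
    le_trans hlow (le_trans (measure_mono (ball_subset_dilate d k m x hxQ)) hmass)
  have hN0 : (0:ℝ) < N := by linarith
  have hM0 : (0:ℝ) < M := by linarith
  have hreal : N⁻¹ * ((2:ℝ) ^ k) ^ n ≤ M⁻¹ * ((2:ℝ) ^ k) ^ n :=
    (ENNReal.ofReal_le_ofReal_iff (by positivity)).mp hchain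
  have h1 : N⁻¹ ≤ M⁻¹ := le_of_mul_le_mul_right hreal (by positivity)
  have h2 : M ≤ N := by
    have h3 := mul_le_mul_of_nonneg_right h1 (mul_pos hN0 hM0).le
    calc M = N⁻¹ * (N * M) := by field_simp
      _ ≤ M⁻¹ * (N * M) := h3
      _ = N := by field_simp
  linarith

/-- In the stopping construction, there is `c₇ = c₇(n) > 0` such that if
`M > max(N, c₇⁻¹ 4N)` then every cube of `HD₀` and every cube of `LD₀` is disjoint from `A`;
consequently `R ∩ ⋃_{Q ∈ Stop} Q ⊆ (R \ A) ∪ (R \ F)` and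
`μ(R ∩ ⋃_{Q ∈ Stop} Q) ≤ μ(R \ A) + μ(R \ F)`. -/
theorem stmt14 (d n : ℕ) (hn : 0 < n) (hnd : n < d) :
    ∃ c₇ : ℝ, 0 < c₇ ∧
      ∀ μ : Measure (Ed d), IsFiniteMeasure μ →
        ∀ (kR : ℤ) (mR : Fin d → ℤ) (N r₀ M : ℝ), 1 ≤ N → 0 < r₀ →
          max N (c₇⁻¹ * (4 * N)) < M →
          (∀ (k : ℤ) (m : Fin d → ℤ), memHD0 d n μ kR mR r₀ M k m →
            dyadicCube d k m ∩ stopA d n μ kR mR N r₀ = ∅) ∧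
          (∀ (k : ℤ) (m : Fin d → ℤ), memLD0 d n μ kR mR r₀ M k m →
            dyadicCube d k m ∩ stopA d n μ kR mR N r₀ = ∅) ∧
          (dyadicCube d kR mR ∩
              ⋃ (q : ℤ × (Fin d → ℤ)) (_ : memStop d n μ kR mR N r₀ M q.1 q.2),
                dyadicCube d q.1 q.2) ⊆
            (dyadicCube d kR mR \ stopA d n μ kR mR N r₀) ∪
              (dyadicCube d kR mR \ stopF d n μ kR mR N) ∧
          μ (dyadicCube d kR mR ∩
              ⋃ (q : ℤ × (Fin d → ℤ)) (_ : memStop d n μ kR mR N r₀ M q.1 q.2),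
                dyadicCube d q.1 q.2) ≤
            μ (dyadicCube d kR mR \ stopA d n μ kR mR N r₀) +
              μ (dyadicCube d kR mR \ stopF d n μ kR mR N) := by
  have hd : 0 < d := lt_trans hn hnd
  have hsd : (0:ℝ) < Real.sqrt d := Real.sqrt_pos.mpr (by exact_mod_cast hd)
  refine ⟨((5 * Real.sqrt d) ^ n)⁻¹, by positivity, ?_⟩
  intro μ _ kR mR N r₀ M hN hr₀ hM
  have hNM : N < M := lt_of_le_of_lt (le_max_left _ _) hM
  have hM4 : (5 * Real.sqrt d) ^ n * (4 * N) < M := by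
    have := lt_of_le_of_lt (le_max_right N _) hM
    rwa [inv_inv] at this
  have hHD := hd_empty d n hd μ kR mR N r₀ M hN hr₀ hM4
  have hLD := ld_empty d n hd μ kR mR N r₀ M hN hr₀ hNM
  refine ⟨hHD, hLD, ?_, ?_⟩
  · rintro x ⟨hxR, hxU⟩
    simp only [mem_iUnion] at hxU
    obtain ⟨⟨k, m⟩, hstop, hxQ⟩ := hxU
    rcases hstop.1 with h | h | h
    · exact Or.inl ⟨hxR, fun hA => (eq_empty_iff_forall_notMem.mp (hHD k m h) x) ⟨hxQ, hA⟩⟩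
    · exact Or.inl ⟨hxR, fun hA => (eq_empty_iff_forall_notMem.mp (hLD k m h) x) ⟨hxQ, hA⟩⟩
    · exact Or.inr ⟨hxR, fun hF =>
        (eq_empty_iff_forall_notMem.mp h.2.2.2.2 x) ⟨hxQ, hF⟩⟩
  · calc μ (dyadicCube d kR mR ∩
        ⋃ (q : ℤ × (Fin d → ℤ)) (_ : memStop d n μ kR mR N r₀ M q.1 q.2), dyadicCube d q.1 q.2)
        ≤ μ ((dyadicCube d kR mR \ stopA d n μ kR mR N r₀) ∪
            (dyadicCube d kR mR \ stopF d n μ kR mR N)) := by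
          apply measure_mono
          rintro x ⟨hxR, hxU⟩
          simp only [mem_iUnion] at hxU
          obtain ⟨⟨k, m⟩, hstop, hxQ⟩ := hxU
          rcases hstop.1 with h | h | h
          · exact Or.inl ⟨hxR, fun hA => (eq_empty_iff_forall_notMem.mp (hHD k m h) x) ⟨hxQ, hA⟩⟩
          · exact Or.inl ⟨hxR, fun hA => (eq_empty_iff_forall_notMem.mp (hLD k m h) x) ⟨hxQ, hA⟩⟩
          · exact Or.inr ⟨hxR, fun hF =>
              (eq_empty_iff_forall_notMem.mp h.2.2.2.2 x) ⟨hxQ, hF⟩⟩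
      _ ≤ _ := measure_union_le _ _


end
end
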